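/- arXiv:1711.06480 — 2 statements merged into one kernel-verified Lean document; each statement's English description precedes it below -/
import Mathlib

section
/- Let r : [0,∞) → ℝ be continuous and let c ≥ 0 be a constant such that liminf_{T→∞} ∫₀^T e^{-ct} r(t) dt - c/2 > 0 (the damped averaged null energy condition along the geodesic, phrased for the function r). Then for every z₀ > 0 there is no differentiable function z : [0,∞) → ℝ with z(0) = z₀ satisfying z'(t) ≥ z(t)²/2 + r(t) for all t ≥ 0. -/
open MeasureTheory Filter Set

/-!
Put `y = e^{-ct} z`. The Riccati inequality gives `y' ≥ e^{-ct} ((z - c)²/2 + r - c²/2)`, and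
`∫₀^T c² e^{-ct} / 2 ≤ c / 2`, so the dANEC hypothesis makes `y T ≥ z₀ + ∫₀^T q` for large `T`,
where `q = e^{-ct} (z - c)² / 2 ≥ 0`. Hence `y ≥ z₀`, so `z = e^{ct} y` eventually exceeds `2c`,
and from then on `q ≥ y² / 8`: `y` dominates a solution of `F' = F² / 8`, `F ≥ z₀`, which must
blow up within time `8 / z₀`.
-/

theorem lt_inv_of_riccati_supersolution {F F' : ℝ → ℝ} {a b k : ℝ} (hab : a ≤ b) (hk : 0 ≤ k)
    (hF : ∀ t ∈ Icc a b, HasDerivWithinAt F (F' t) (Icc a b) t) (ha : 0 < F a)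
    (hF' : ∀ t ∈ Icc a b, k * F t ^ 2 ≤ F' t) : k * (b - a) < (F a)⁻¹ := by
  have hcont : ContinuousOn F (Icc a b) := fun t ht => (hF t ht).continuousWithinAt
  have hderiv : ∀ t ∈ interior (Icc a b),
      HasDerivWithinAt F (F' t) (interior (Icc a b)) t :=
    fun t ht => (hF t (interior_subset ht)).mono interior_subset
  have hpos : ∀ t ∈ Icc a b, 0 < F t := by
    have hmono : MonotoneOn F (Icc a b) :=
      monotoneOn_of_hasDerivWithinAt_nonneg (convex_Icc a b) hcont hderiv
        fun t ht => (mul_nonneg hk (sq_nonneg _)).trans (hF' t (interior_subset ht))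
    exact fun t ht => ha.trans_le (hmono (left_mem_Icc.2 hab) ht ht.1)
  -- `-1/F` grows at least at rate `k`, yet stays negative.
  have hW : MonotoneOn (fun t => -(F t)⁻¹ - k * t) (Icc a b) := by
    refine monotoneOn_of_hasDerivWithinAt_nonneg (f' := fun t => F' t / F t ^ 2 - k)
      (convex_Icc a b) ?_ (fun t ht => ?_) (fun t ht => ?_)
    · exact ((hcont.inv₀ fun t ht => (hpos t ht).ne').neg).sub
        (continuousOn_const.mul continuousOn_id)
    · exact (((hderiv t ht).inv (hpos t (interior_subset ht)).ne').neg.sub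
        ((hasDerivAt_id' t).hasDerivWithinAt.const_mul k)).congr_deriv (by ring)
    · have := hpos t (interior_subset ht)
      rw [sub_nonneg, le_div_iff₀ (by positivity)]
      exact hF' t (interior_subset ht)
  have hW_ab := hW (left_mem_Icc.2 hab) (right_mem_Icc.2 hab) hab
  have hb := inv_pos.2 (hpos b (right_mem_Icc.2 hab))
  simp only at hW_ab
  linarith

theorem lt_inv_of_integral_riccati_supersolution {u g : ℝ → ℝ} {a b ε k : ℝ} (hab : a ≤ b)
    (hε : 0 < ε) (hk : 0 ≤ k) (hg : ContinuousOn g (Icc a b))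
    (hgu : ∀ t ∈ Icc a b, k * u t ^ 2 ≤ g t) (hu : ∀ t ∈ Icc a b, ε + ∫ s in a..t, g s ≤ u t) :
    k * (b - a) < ε⁻¹ := by
  set F := fun t => ε + ∫ s in a..t, g s
  have hFa : F a = ε := by simp [F]
  have hF : ∀ t ∈ Icc a b, HasDerivWithinAt F (g t) (Icc a b) t := by
    intro t ht
    have : Fact (t ∈ Icc a b) := ⟨ht⟩
    exact (intervalIntegral.integral_hasDerivWithinAt_right
      (hg.mono (uIcc_subset_Icc (left_mem_Icc.2 hab) ht)).intervalIntegrable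
      (hg.stronglyMeasurableAtFilter_nhdsWithin measurableSet_Icc t) (hg t ht)).const_add ε
  have hFε : ∀ t ∈ Icc a b, ε ≤ F t := fun t ht =>
    le_add_of_nonneg_right <| intervalIntegral.integral_nonneg ht.1 fun s hs =>
      (mul_nonneg hk (sq_nonneg _)).trans (hgu s ⟨hs.1, hs.2.trans ht.2⟩)
  rw [← hFa]
  refine lt_inv_of_riccati_supersolution hab hk hF (hFa ▸ hε) fun t ht => ?_
  have hF0 : 0 ≤ F t := hε.le.trans (hFε t ht)
  calc k * F t ^ 2 ≤ k * u t ^ 2 := by gcongr; exact hu t ht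
    _ ≤ g t := hgu t ht

theorem integral_mul_exp_neg_mul (c T : ℝ) :
    ∫ t in (0:ℝ)..T, c * Real.exp (-c * t) = 1 - Real.exp (-c * T) := by
  have hderiv (t : ℝ) : HasDerivAt (fun t => -Real.exp (-c * t)) (c * Real.exp (-c * t)) t :=
    (((hasDerivAt_id' t).const_mul (-c)).exp).neg.congr_deriv (by ring)
  rw [intervalIntegral.integral_eq_sub_of_hasDerivAt (fun t _ => hderiv t)
    (by apply Continuous.intervalIntegrable; fun_prop)]
  simp only [neg_mul, mul_zero, Real.exp_zero, sub_neg_eq_add]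
  ring

theorem Real.eventually_lt_of_nonneg_lt_liminf {α : Type*} {f : Filter α} {u : α → ℝ} {b : ℝ}
    (hb : 0 ≤ b) (h : b < liminf u f) : ∀ᶠ x in f, b < u x := by
  refine eventually_lt_of_lt_liminf h ?_
  by_contra hu
  rw [Real.liminf_of_not_isBoundedUnder hu] at h
  linarith

section Focusing

variable {z z' r : ℝ → ℝ}

theorem integral_exp_neg_mul_le_sub_of_riccati (c : ℝ) (hr : ContinuousOn r (Ici 0))
    (hz : ∀ t ∈ Ici (0:ℝ), HasDerivWithinAt z (z' t) (Ici 0) t ∧ z t ^ 2 / 2 + r t ≤ z' t)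
    {T : ℝ} (hT : 0 ≤ T) :
    ∫ t in (0:ℝ)..T, Real.exp (-c * t) * ((z t - c) ^ 2 / 2 + r t - c ^ 2 / 2)
      ≤ Real.exp (-c * T) * z T - z 0 := by
  have hzc : ContinuousOn z (Icc 0 T) := fun t ht =>
    (hz t ht.1).1.continuousWithinAt.mono Icc_subset_Ici_self
  have hrc : ContinuousOn r (Icc 0 T) := hr.mono Icc_subset_Ici_self
  have hderiv : ∀ t ∈ Ioo 0 T, HasDerivWithinAt (fun t => Real.exp (-c * t) * z t)
      (Real.exp (-c * t) * (z' t - c * z t)) (Ioi t) t := fun t ht => by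
    have hzt := (hz t ht.1.le).1.hasDerivAt (Ici_mem_nhds ht.1)
    exact (((hasDerivAt_id' t).const_mul (-c)).exp.mul hzt).hasDerivWithinAt.congr_deriv
      (by ring)
  have hle : ∀ t ∈ Ioo 0 T, Real.exp (-c * t) * ((z t - c) ^ 2 / 2 + r t - c ^ 2 / 2)
      ≤ Real.exp (-c * t) * (z' t - c * z t) := fun t ht => by
    have := (hz t ht.1.le).2
    exact mul_le_mul_of_nonneg_left (by nlinarith) (Real.exp_pos _).le
  simpa using intervalIntegral.integral_le_sub_of_hasDeriv_right_of_le hT (by fun_prop) hderiv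
    (ContinuousOn.integrableOn_Icc (by fun_prop)) hle

theorem add_integral_exp_neg_mul_sub_le_of_riccati {c : ℝ} (hc : 0 ≤ c)
    (hr : ContinuousOn r (Ici 0))
    (hz : ∀ t ∈ Ici (0:ℝ), HasDerivWithinAt z (z' t) (Ici 0) t ∧ z t ^ 2 / 2 + r t ≤ z' t)
    {T : ℝ} (hT : 0 ≤ T) :
    z 0 + (∫ t in (0:ℝ)..T, Real.exp (-c * t) * ((z t - c) ^ 2 / 2))
      + ((∫ t in (0:ℝ)..T, Real.exp (-c * t) * r t) - c / 2) ≤ Real.exp (-c * T) * z T := by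
  have hzc : ContinuousOn z (uIcc 0 T) := fun t ht =>
    (hz t (uIcc_of_le hT ▸ ht).1).1.continuousWithinAt.mono (uIcc_of_le hT ▸ Icc_subset_Ici_self)
  have hrc : ContinuousOn r (uIcc 0 T) := hr.mono (uIcc_of_le hT ▸ Icc_subset_Ici_self)
  have hsplit : ∫ t in (0:ℝ)..T, Real.exp (-c * t) * ((z t - c) ^ 2 / 2 + r t - c ^ 2 / 2)
      = (∫ t in (0:ℝ)..T, Real.exp (-c * t) * ((z t - c) ^ 2 / 2))
        + (∫ t in (0:ℝ)..T, Real.exp (-c * t) * r t)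
        - c / 2 * ∫ t in (0:ℝ)..T, c * Real.exp (-c * t) := by
    rw [← intervalIntegral.integral_const_mul, ← intervalIntegral.integral_add,
      ← intervalIntegral.integral_sub]
    · congr 1 with t
      ring
    all_goals exact ContinuousOn.intervalIntegrable (by fun_prop)
  have hexp : c / 2 * ∫ t in (0:ℝ)..T, c * Real.exp (-c * t) ≤ c / 2 := by
    rw [integral_mul_exp_neg_mul]
    exact mul_le_of_le_one_right (by positivity) (sub_le_self _ (Real.exp_pos _).le)
  have := integral_exp_neg_mul_le_sub_of_riccati c hr hz hT
  linarith

theorem add_integral_Icc_le_exp_neg_mul_of_riccati {c a t : ℝ} (hc : 0 ≤ c)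
    (hr : ContinuousOn r (Ici 0))
    (hz : ∀ t ∈ Ici (0:ℝ), HasDerivWithinAt z (z' t) (Ici 0) t ∧ z t ^ 2 / 2 + r t ≤ z' t)
    (ha : 0 ≤ a) (hI : ∀ T ≥ a, c / 2 < ∫ t in (0:ℝ)..T, Real.exp (-c * t) * r t) (hat : a ≤ t) :
    z 0 + ∫ s in a..t, Real.exp (-c * s) * ((z s - c) ^ 2 / 2) ≤ Real.exp (-c * t) * z t := by
  set q : ℝ → ℝ := fun s => Real.exp (-c * s) * ((z s - c) ^ 2 / 2)
  have hzc : ContinuousOn z (Ici 0) := fun t ht => (hz t ht).1.continuousWithinAt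
  have hqi : ∀ x y : ℝ, 0 ≤ x → 0 ≤ y → IntervalIntegrable q volume x y := fun x y hx hy =>
    (ContinuousOn.mono (by fun_prop) fun s hs => (le_min hx hy).trans hs.1).intervalIntegrable
  have := add_integral_exp_neg_mul_sub_le_of_riccati hc hr hz (ha.trans hat)
  have := intervalIntegral.integral_add_adjacent_intervals (hqi 0 a le_rfl ha)
    (hqi a t ha (ha.trans hat))
  have := hI t hat
  have : 0 ≤ ∫ s in (0:ℝ)..a, q s :=
    intervalIntegral.integral_nonneg ha fun s _ => by positivity
  linarith

end Focusing

theorem two_mul_le_of_le_exp_neg_mul {c ε t x : ℝ} (hc : 0 ≤ c) (hε : 0 < ε) (ht : 2 / ε ≤ t)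
    (hx : ε ≤ Real.exp (-c * t) * x) : 2 * c ≤ x := by
  have hx' : x = Real.exp (c * t) * (Real.exp (-c * t) * x) := by
    rw [← mul_assoc, ← Real.exp_add]; simp
  have htε : 2 ≤ t * ε := (div_le_iff₀ hε).1 ht
  have hexp := Real.add_one_le_exp (c * t)
  have ht0 : 0 ≤ t := (div_pos two_pos hε).le.trans ht
  rw [hx']
  calc 2 * c ≤ (c * t + 1) * ε := by nlinarith
    _ ≤ Real.exp (c * t) * (Real.exp (-c * t) * x) := by gcongr

theorem eighth_mul_sq_exp_neg_mul_le {c t x : ℝ} (hc : 0 ≤ c) (ht : 0 ≤ t) (hx : 2 * c ≤ x) :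
    1 / 8 * (Real.exp (-c * t) * x) ^ 2 ≤ Real.exp (-c * t) * ((x - c) ^ 2 / 2) := by
  have hE : Real.exp (-c * t) ≤ 1 := Real.exp_le_one_iff.2 (by nlinarith)
  have hE0 := (Real.exp_pos (-c * t)).le
  have hsq : x ^ 2 / 4 ≤ (x - c) ^ 2 := by nlinarith
  calc 1 / 8 * (Real.exp (-c * t) * x) ^ 2
      = Real.exp (-c * t) * (Real.exp (-c * t) * (x ^ 2 / 8)) := by ring
    _ ≤ Real.exp (-c * t) * (x ^ 2 / 8) := by
      gcongr; exact mul_le_of_le_one_left (by positivity) hE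
    _ ≤ Real.exp (-c * t) * ((x - c) ^ 2 / 2) := mul_le_mul_of_nonneg_left (by linarith) hE0

/-- The focusing claim used in Theorem 2.1 (dANEC, `s = 2` case): if `r` is continuous on
`[0,∞)` and there is `c ≥ 0` with `liminf_{T→∞} ∫₀^T e^{-ct} r(t) dt - c/2 > 0`, then for
every `z₀ > 0` there is no differentiable `z : [0,∞) → ℝ` with `z(0) = z₀` satisfying
`ż(t) ≥ z(t)²/2 + r(t)` for all `t ≥ 0`. -/
theorem dANEC_focusing
    (r : ℝ → ℝ) (hr : ContinuousOn r (Ici 0)) (c : ℝ) (hc : 0 ≤ c)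
    (h : 0 < liminf (fun T : ℝ => ∫ t in (0:ℝ)..T, Real.exp (-c * t) * r t) atTop - c / 2) :
    ∀ z₀ : ℝ, 0 < z₀ →
      ¬ ∃ z z' : ℝ → ℝ, z 0 = z₀ ∧
        ∀ t ∈ Ici (0:ℝ),
          HasDerivWithinAt z (z' t) (Ici 0) t ∧ z t ^ 2 / 2 + r t ≤ z' t := by
  rintro z₀ hz₀ ⟨z, z', rfl, hz⟩
  set q : ℝ → ℝ := fun t => Real.exp (-c * t) * ((z t - c) ^ 2 / 2)
  obtain ⟨T₀, hT₀⟩ := eventually_atTop.1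
    (Real.eventually_lt_of_nonneg_lt_liminf (by positivity) (sub_pos.1 h))
  set a := max T₀ (2 / z 0)
  have ha : 0 ≤ a := (div_pos two_pos hz₀).le.trans (le_max_right _ _)
  have hy (t : ℝ) (ht : t ∈ Ici a) : z 0 + ∫ s in a..t, q s ≤ Real.exp (-c * t) * z t :=
    add_integral_Icc_le_exp_neg_mul_of_riccati hc hr hz ha
      (fun T hT => hT₀ T ((le_max_left _ _).trans hT)) ht
  have hq (t : ℝ) : 0 ≤ q t := by positivity
  have hqy (t : ℝ) (ht : t ∈ Ici a) : 1 / 8 * (Real.exp (-c * t) * z t) ^ 2 ≤ q t :=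
    eighth_mul_sq_exp_neg_mul_le hc (ha.trans ht) <|
      two_mul_le_of_le_exp_neg_mul hc hz₀ ((le_max_right _ _).trans ht) <|
        (le_add_of_nonneg_right (intervalIntegral.integral_nonneg ht fun s _ => hq s)).trans
          (hy t ht)
  have hqc : ContinuousOn q (Icc a (a + 8 / z 0)) := by
    have hzc : ContinuousOn z (Icc a (a + 8 / z 0)) := fun t ht =>
      (hz t (ha.trans ht.1)).1.continuousWithinAt.mono fun s hs => ha.trans hs.1
    fun_prop
  have := lt_inv_of_integral_riccati_supersolution (le_add_of_nonneg_right (by positivity))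
    hz₀ (by norm_num) hqc (fun t ht => hqy t ht.1) (fun t ht => hy t ht.1)
  field_simp at this
  linarith
end

section
/- Let r : [0,∞) → ℝ be continuous with liminf_{T→∞} ∫₀^T r(t) dt > 0, and let z₀ ≥ 0 and s > 0. Then there is no differentiable function z : [0,∞) → ℝ with z(0) = z₀ and z'(t) = z(t)²/s + r(t) for all t ≥ 0. -/
/-!
Integrating the equation gives `z t = z₀ + ∫₀ᵗ z²/s + ∫₀ᵗ r`. Once `∫₀ᵗ r > ε` for all `t ≥ T₀`,
`z` dominates `w t = ε + ∫_{T₀}^t z²/s`, which satisfies `s w' ≥ w²`. Then `1 / w` decreases at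
rate at least `1 / s` while staying positive, which is impossible beyond time `T₀ + s / ε`.
-/

open MeasureTheory Filter Set

theorem Real.exists_pos_eventually_lt_of_liminf_pos {α : Type*} {l : Filter α} {u : α → ℝ}
    (h : 0 < liminf u l) : ∃ ε > 0, ∀ᶠ x in l, ε < u x := by
  have hbdd : l.IsBoundedUnder (· ≥ ·) u := by
    by_contra hb
    exact h.ne' (Real.liminf_of_not_isBoundedUnder hb)
  obtain ⟨ε, hε, hεu⟩ := exists_between h
  exact ⟨ε, hε, eventually_lt_of_lt_liminf hεu hbdd⟩

theorem integral_eq_sub_of_hasDerivWithinAt_Ici {f f' : ℝ → ℝ} {a b : ℝ} (hab : a ≤ b)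
    (hf : ∀ t ∈ Ici a, HasDerivWithinAt f (f' t) (Ici a) t) (hf' : ContinuousOn f' (Ici a)) :
    ∫ t in a..b, f' t = f b - f a := by
  refine intervalIntegral.integral_eq_sub_of_hasDerivAt_of_le hab
    (fun t ht => (hf t ht.1).continuousWithinAt.mono Icc_subset_Ici_self)
    (fun t ht => (hf t ht.1.le).hasDerivAt (Ici_mem_nhds ht.1)) ?_
  exact (hf'.mono Icc_subset_Ici_self).intervalIntegrable_of_Icc hab

theorem sub_lt_div_of_sq_le_mul_deriv {w w' : ℝ → ℝ} {a b s : ℝ} (hab : a ≤ b) (hs : 0 < s)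
    (hw : ContinuousOn w (Icc a b)) (hpos : ∀ x ∈ Icc a b, 0 < w x)
    (hderiv : ∀ x ∈ Ioo a b, HasDerivAt w (w' x) x)
    (hineq : ∀ x ∈ Ioo a b, w x ^ 2 ≤ s * w' x) :
    b - a < s / w a := by
  -- `1 / w + t / s` is antitone, since `(1 / w)' = -w' / w² ≤ -1 / s`.
  have hanti : AntitoneOn (fun t => (w t)⁻¹ + t / s) (Icc a b) := by
    refine antitoneOn_of_hasDerivWithinAt_nonpos (convex_Icc a b)
      ((hw.inv₀ fun x hx => (hpos x hx).ne').add (continuousOn_id.div_const s))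
      (f' := fun x => -w' x / w x ^ 2 + 1 / s) ?_ ?_ <;> rw [interior_Icc] <;> intro x hx
    · have hx' := (hpos x (Ioo_subset_Icc_self hx)).ne'
      exact (((hderiv x hx).inv hx').add ((hasDerivAt_id x).div_const s)).hasDerivWithinAt
    · have hwx := hpos x (Ioo_subset_Icc_self hx)
      rw [neg_div, neg_add_nonpos_iff, div_le_div_iff₀ hs (by positivity)]
      linarith [hineq x hx]
  have hba := hanti ⟨le_rfl, hab⟩ ⟨hab, le_rfl⟩ hab
  have hinv_b := inv_pos.2 (hpos b ⟨hab, le_rfl⟩)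
  have hlt : (b - a) / s < (w a)⁻¹ := by rw [sub_div]; linarith
  rwa [div_lt_iff₀ hs, mul_comm, ← div_eq_mul_inv] at hlt

theorem sub_lt_div_of_add_integral_sq_le {z : ℝ → ℝ} {a b s ε : ℝ} (hab : a ≤ b) (hs : 0 < s)
    (hε : 0 < ε) (hz : ContinuousOn z (Icc a b))
    (hle : ∀ t ∈ Icc a b, ε + ∫ x in a..t, z x ^ 2 / s ≤ z t) :
    b - a < s / ε := by
  set w : ℝ → ℝ := fun t => ε + ∫ x in a..t, z x ^ 2 / s
  have hq : ContinuousOn (fun x => z x ^ 2 / s) (Icc a b) := (hz.pow 2).div_const s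
  have hw_pos : ∀ t ∈ Icc a b, 0 < w t := fun t ht =>
    add_pos_of_pos_of_nonneg hε (intervalIntegral.integral_nonneg ht.1 fun _ _ => by positivity)
  have hwc : ContinuousOn w (Icc a b) := by
    have hint : IntegrableOn (fun x => z x ^ 2 / s) (uIcc a b) := by
      rw [uIcc_of_le hab]; exact hq.integrableOn_Icc
    have := intervalIntegral.continuousOn_primitive_interval hint
    rw [uIcc_of_le hab] at this
    exact continuousOn_const.add this
  have hderiv : ∀ x ∈ Ioo a b, HasDerivAt w (z x ^ 2 / s) x := fun x hx =>
    (intervalIntegral.integral_hasDerivAt_right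
      ((hq.mono (Icc_subset_Icc_right hx.2.le)).intervalIntegrable_of_Icc hx.1.le)
      ((hq.mono Ioo_subset_Icc_self).stronglyMeasurableAtFilter isOpen_Ioo x hx)
      (hq.continuousAt (Icc_mem_nhds hx.1 hx.2))).const_add ε
  have hineq : ∀ x ∈ Ioo a b, w x ^ 2 ≤ s * (z x ^ 2 / s) := fun x hx => by
    have hx' := Ioo_subset_Icc_self hx
    rw [mul_div_cancel₀ _ hs.ne']
    exact pow_le_pow_left₀ (hw_pos x hx').le (hle x hx') 2
  simpa [w] using sub_lt_div_of_sq_le_mul_deriv hab hs hwc hw_pos hderiv hineq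

/-- The `c = 0` (ANEC) special case of Lemma 1.1: if `r` is continuous on `[0,∞)` with
`liminf_{T→∞} ∫₀^T r(t) dt > 0`, `z₀ ≥ 0`, and `s > 0`, then there is no differentiable
`z : [0,∞) → ℝ` with `z(0) = z₀` and `ż(t) = z(t)²/s + r(t)` for all `t ≥ 0`. -/
theorem anec_no_global_solution
    (r : ℝ → ℝ) (hr : ContinuousOn r (Ici 0))
    (hliminf : 0 < liminf (fun T : ℝ => ∫ t in (0:ℝ)..T, r t) atTop)
    (z₀ : ℝ) (hz₀ : 0 ≤ z₀) (s : ℝ) (hs : 0 < s) :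
    ¬ ∃ z : ℝ → ℝ, z 0 = z₀ ∧
      ∀ t ∈ Ici (0:ℝ), HasDerivWithinAt z (z t ^ 2 / s + r t) (Ici 0) t := by
  rintro ⟨z, rfl, hz⟩
  have hzc : ContinuousOn z (Ici 0) := fun t ht => (hz t ht).continuousWithinAt
  have hq : ContinuousOn (fun x => z x ^ 2 / s) (Ici 0) := (hzc.pow 2).div_const s
  have hint {f : ℝ → ℝ} (hf : ContinuousOn f (Ici 0)) {t : ℝ} (ht : 0 ≤ t) :
      IntervalIntegrable f volume 0 t :=
    (hf.mono Icc_subset_Ici_self).intervalIntegrable_of_Icc ht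
  have hz_eq {t : ℝ} (ht : 0 ≤ t) :
      z t - z 0 = (∫ x in 0..t, z x ^ 2 / s) + ∫ x in 0..t, r x := by
    rw [← integral_eq_sub_of_hasDerivWithinAt_Ici ht hz (hq.add hr),
      intervalIntegral.integral_add (hint hq ht) (hint hr ht)]
  obtain ⟨ε, hε, hεr⟩ := Real.exists_pos_eventually_lt_of_liminf_pos hliminf
  obtain ⟨T₀, hT₀⟩ := (hεr.and (eventually_ge_atTop 0)).exists_forall_of_atTop
  have hT₀0 : 0 ≤ T₀ := (hT₀ T₀ le_rfl).2
  have hle : ∀ t ∈ Icc T₀ (T₀ + s / ε), ε + ∫ x in T₀..t, z x ^ 2 / s ≤ z t := by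
    rintro t ⟨hT₀t, -⟩
    have hsplit := intervalIntegral.integral_interval_sub_left (hint hq (hT₀0.trans hT₀t))
      (hint hq hT₀0)
    have hq_nonneg : 0 ≤ ∫ x in 0..T₀, z x ^ 2 / s :=
      intervalIntegral.integral_nonneg hT₀0 fun _ _ => by positivity
    linarith [hz_eq (hT₀0.trans hT₀t), (hT₀ t hT₀t).1]
  have hblowup := sub_lt_div_of_add_integral_sq_le
    (le_add_of_nonneg_right (div_pos hs hε).le) hs hε
    (hzc.mono (Icc_subset_Ici_self.trans (Ici_subset_Ici.2 hT₀0))) hle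
  rw [add_sub_cancel_left] at hblowup
  exact lt_irrefl _ hblowup
end
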